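/- arXiv:2010.12946 — 3 statements merged into one kernel-verified Lean document; each statement's English description precedes it below -/
import Mathlib

section
/- Let d ≥ 2, R > 0, and let μ be a measure on ℝ^d that is supported in the closed ball of radius R around the origin and satisfies μ(A) ≤ |A| (Lebesgue measure) for every measurable set A. Then there is a constant c_d > 0 depending only on d such that for every continuously differentiable f : ℝ^d → ℝ with f(0) = 0, one has |∫_{ℝ^d} f(x) dμ(x)| ≤ c_d · R · μ(ℝ^d)^{(d−1)/d} · ‖∇f‖_{L^{d,1}({x : ‖x‖ ≤ R})}. -/
open MeasureTheory Metric
open scoped ENNReal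

noncomputable section

/-- The Lorentz `L^{d,1}` norm of `g` on `X`:
`‖g‖_{L^{d,1}(X)} = d ∫₀^∞ |{x ∈ X : |g x| ≥ t}|^{1/d} dt`. -/
def lorentzNorm (d : ℕ) (g : EuclideanSpace ℝ (Fin d) → ℝ)
    (X : Set (EuclideanSpace ℝ (Fin d))) : ℝ :=
  d * ∫ t in Set.Ioi (0 : ℝ), (volume {x ∈ X | t ≤ |g x|}).toReal ^ ((1 : ℝ) / d)

/-!
Along the ray through `x ∈ B = closedBall 0 R`, `|f x| ≤ R ∫₀¹ |∇f (t x)| dt`. For fixed `t`, the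
layer-cake formula and `μ ≤ volume` bound the `μ`-mass of `{x ∈ B : |∇f (t x)| ≥ s}` by
`min (μ ℝᵈ) (t⁻ᵈ V s)`, where `V s = |{y ∈ B : |∇f y| ≥ s}|`, since this set lies in `t⁻¹ • B`.
Integrating this minimum over `t > 0` gives `d / (d - 1) · μ(ℝᵈ)^((d-1)/d) · (V s)^(1/d)`, and
integrating over `s` gives the Lorentz norm. As `d / (d - 1) ≤ d` for `d ≥ 2`, the constant `1` works.
-/

open Set Module
open scoped Pointwise

lemma lintegral_Ioi_ofReal_inv_rpow {p r : ℝ} (hp : 1 < p) (hr : 0 < r) :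
    ∫⁻ t in Ioi r, ENNReal.ofReal (t⁻¹ ^ p) = ENNReal.ofReal (r ^ (1 - p) / (p - 1)) := by
  have hp' : -p < -1 := by linarith
  have hpos : ∀ t ∈ Ioi r, 0 ≤ t := fun t ht => (hr.trans ht).le
  rw [setLIntegral_congr_fun measurableSet_Ioi (g := fun t => ENNReal.ofReal (t ^ (-p)))
      fun t ht => by dsimp only; rw [Real.inv_rpow (hpos t ht), Real.rpow_neg (hpos t ht)],
    ← ofReal_integral_eq_lintegral_ofReal (integrableOn_Ioi_rpow_of_lt hp' hr)
      ((ae_restrict_iff' measurableSet_Ioi).mpr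
        (ae_of_all _ fun t ht => Real.rpow_nonneg (hpos t ht) _)),
    integral_Ioi_rpow_of_lt hp' hr, neg_div, ← div_neg]
  ring_nf

lemma lintegral_Ioi_min_inv_rpow_le {p : ℝ} (hp : 1 < p) {M V : ℝ≥0∞} (hM : M ≠ ∞)
    (hV : V ≠ ∞) :
    ∫⁻ t in Ioi 0, min M (ENNReal.ofReal (t⁻¹ ^ p) * V) ≤
      ENNReal.ofReal (p / (p - 1)) * M ^ ((p - 1) / p) * V ^ (1 / p) := by
  rcases eq_or_ne M 0 with rfl | hM0
  · simp
  rcases eq_or_ne V 0 with rfl | hV0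
  · simp
  obtain ⟨m, hm, rfl⟩ : ∃ m : ℝ, 0 < m ∧ M = ENNReal.ofReal m :=
    ⟨M.toReal, ENNReal.toReal_pos hM0 hM, (ENNReal.ofReal_toReal hM).symm⟩
  obtain ⟨v, hv, rfl⟩ : ∃ v : ℝ, 0 < v ∧ V = ENNReal.ofReal v :=
    ⟨V.toReal, ENNReal.toReal_pos hV0 hV, (ENNReal.ofReal_toReal hV).symm⟩
  have hp0 : 0 < p := by linarith
  have hp1 : 0 < p - 1 := by linarith
  -- the two terms of the minimum cross at `r`
  set r := (v / m) ^ (1 / p) with hr_def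
  have hr : 0 < r := by positivity
  have hrp : r ^ p = v / m := by
    rw [← Real.rpow_mul (by positivity), one_div_mul_cancel hp0.ne', Real.rpow_one]
  have hmr : m * r = m ^ ((p - 1) / p) * v ^ (1 / p) := by
    rw [hr_def, Real.div_rpow hv.le hm.le, sub_div, div_self hp0.ne', Real.rpow_sub hm,
      Real.rpow_one]
    ring
  have hvr : r ^ (1 - p) * v = m * r := by
    rw [Real.rpow_sub hr, Real.rpow_one, hrp]; field_simp
  set φ : ℝ → ℝ≥0∞ := fun t => min (ENNReal.ofReal m) (ENNReal.ofReal (t⁻¹ ^ p) * ENNReal.ofReal v)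
  calc ∫⁻ t in Ioi 0, φ t = (∫⁻ t in Ioc 0 r, φ t) + ∫⁻ t in Ioi r, φ t := by
        rw [← Ioc_union_Ioi_eq_Ioi hr.le, lintegral_union measurableSet_Ioi Ioc_disjoint_Ioi_same]
    _ ≤ (∫⁻ _ in Ioc 0 r, ENNReal.ofReal m)
        + ∫⁻ t in Ioi r, ENNReal.ofReal (t⁻¹ ^ p) * ENNReal.ofReal v := by
        gcongr <;> simp [φ]
    _ = ENNReal.ofReal (m * r + r ^ (1 - p) * v / (p - 1)) := by
        rw [setLIntegral_const, lintegral_mul_const' _ _ ENNReal.ofReal_ne_top,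
          lintegral_Ioi_ofReal_inv_rpow hp hr, Real.volume_Ioc, sub_zero,
          ← ENNReal.ofReal_mul hm.le, ← ENNReal.ofReal_mul (by positivity),
          ← ENNReal.ofReal_add (by positivity) (by positivity), div_mul_eq_mul_div]
    _ = ENNReal.ofReal (p / (p - 1)) * ENNReal.ofReal m ^ ((p - 1) / p)
          * ENNReal.ofReal v ^ (1 / p) := by
        rw [ENNReal.ofReal_rpow_of_nonneg hm.le (by positivity),
          ENNReal.ofReal_rpow_of_nonneg hv.le (by positivity),
          ← ENNReal.ofReal_mul (by positivity), ← ENNReal.ofReal_mul (by positivity), hvr,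
          mul_assoc, ← hmr]
        congr 1
        field_simp
        ring

section

variable {E : Type*} [NormedAddCommGroup E] [NormedSpace ℝ E]

lemma enorm_sub_le_lintegral_fderiv_smul {F : Type*}
    [NormedAddCommGroup F] [NormedSpace ℝ F] {f : E → F} (hf : ContDiff ℝ 1 f) (x : E) :
    ‖f x - f 0‖ₑ ≤ ‖x‖ₑ * ∫⁻ t in Ioc (0 : ℝ) 1, ‖fderiv ℝ f (t • x)‖ₑ := by
  have hline : ContDiff ℝ 1 fun t : ℝ => f (t • x) := hf.comp (contDiff_id.smul contDiff_const)
  have hderiv (t : ℝ) : deriv (fun t : ℝ => f (t • x)) t = fderiv ℝ f (t • x) x := by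
    have := ((hf.differentiable one_ne_zero _).hasFDerivAt.comp_hasDerivAt t
      ((hasDerivAt_id t).smul_const x))
    simpa [Function.comp_def] using this.deriv
  calc ‖f x - f 0‖ₑ = ‖f ((1 : ℝ) • x) - f ((0 : ℝ) • x)‖ₑ := by simp
    _ ≤ ∫⁻ t in Icc (0 : ℝ) 1, ‖deriv (fun t : ℝ => f (t • x)) t‖ₑ :=
      enorm_sub_le_lintegral_deriv_of_contDiffOn_Icc hline.contDiffOn zero_le_one
    _ ≤ ∫⁻ t in Ioc (0 : ℝ) 1, ‖fderiv ℝ f (t • x)‖ₑ * ‖x‖ₑ := by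
      rw [← restrict_Ioc_eq_restrict_Icc]
      exact lintegral_mono fun t => hderiv t ▸ (fderiv ℝ f (t • x)).le_opENorm x
    _ = ‖x‖ₑ * ∫⁻ t in Ioc (0 : ℝ) 1, ‖fderiv ℝ f (t • x)‖ₑ := by
      rw [lintegral_mul_const' _ _ enorm_ne_top, mul_comm]

variable [MeasurableSpace E] [BorelSpace E]

lemma lintegral_enorm_le_lintegral_fderiv_smul {F : Type*} [NormedAddCommGroup F]
    [NormedSpace ℝ F] {μ : Measure E} [SFinite μ] {R : ℝ} (hμ : μ (closedBall 0 R)ᶜ = 0)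
    {f : E → F} (hf : ContDiff ℝ 1 f) (hf0 : f 0 = 0) :
    ∫⁻ x, ‖f x‖ₑ ∂μ ≤ ENNReal.ofReal R *
      ∫⁻ t in Ioc (0 : ℝ) 1, ∫⁻ x in closedBall 0 R, ‖fderiv ℝ f (t • x)‖ₑ ∂μ := by
  have hμB : μ.restrict (closedBall 0 R) = μ := Measure.restrict_eq_self_of_ae_mem (ae_iff.2 hμ)
  have hmeas : Measurable fun p : E × ℝ => ‖fderiv ℝ f (p.2 • p.1)‖ₑ :=
    ((hf.continuous_fderiv one_ne_zero).comp (continuous_snd.smul continuous_fst)).enorm.measurable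
  calc ∫⁻ x, ‖f x‖ₑ ∂μ = ∫⁻ x in closedBall 0 R, ‖f x - f 0‖ₑ ∂μ := by
        simp only [hμB, hf0, sub_zero]
    _ ≤ ∫⁻ x in closedBall 0 R,
          ENNReal.ofReal R * (∫⁻ t in Ioc (0 : ℝ) 1, ‖fderiv ℝ f (t • x)‖ₑ) ∂μ := by
        refine setLIntegral_mono' measurableSet_closedBall fun x hx => ?_
        refine (enorm_sub_le_lintegral_fderiv_smul hf x).trans (mul_le_mul_left ?_ _)
        rw [← ofReal_norm]
        exact ENNReal.ofReal_le_ofReal (mem_closedBall_zero_iff.1 hx)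
    _ = _ := by
        rw [lintegral_const_mul' _ _ ENNReal.ofReal_ne_top,
          lintegral_lintegral_swap hmeas.aemeasurable]

variable [FiniteDimensional ℝ E]

/-- Scaling by `t` turns the superlevel sets of `g ∘ (t • ·)` into `t⁻¹`-dilates of those of `g`. -/
lemma setLIntegral_comp_smul_le {μ ν : Measure E} [ν.IsAddHaarMeasure] (hμν : μ ≤ ν)
    {B : Set E} (hB : MeasurableSet B) {t : ℝ} (ht : 0 < t) (hBt : ∀ x ∈ B, t • x ∈ B)
    {g : E → ℝ} (hg : Measurable g) (hg0 : 0 ≤ g) :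
    ∫⁻ x in B, ENNReal.ofReal (g (t • x)) ∂μ ≤ ∫⁻ s in Ioi 0,
      min (μ univ) (ENNReal.ofReal (t⁻¹ ^ (finrank ℝ E : ℝ)) * ν {y ∈ B | s ≤ g y}) := by
  rw [lintegral_eq_lintegral_meas_le (f := fun x => g (t • x)) _
    (ae_of_all _ fun x => hg0 (t • x)) (hg.comp (measurable_const_smul t)).aemeasurable]
  refine lintegral_mono fun s => le_min
    ((measure_mono (subset_univ _)).trans (Measure.restrict_le_self _)) ?_
  have hsub : {x | s ≤ g (t • x)} ∩ B ⊆ t⁻¹ • {y ∈ B | s ≤ g y} := fun x ⟨hxs, hxB⟩ =>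
    mem_smul_set.2 ⟨t • x, ⟨hBt x hxB, hxs⟩, by rw [smul_smul, inv_mul_cancel₀ ht.ne', one_smul]⟩
  calc μ.restrict B {x | s ≤ g (t • x)} = μ ({x | s ≤ g (t • x)} ∩ B) :=
        Measure.restrict_apply' hB
    _ ≤ ν (t⁻¹ • {y ∈ B | s ≤ g y}) := (hμν _).trans (measure_mono hsub)
    _ = _ := by rw [Measure.addHaar_smul_of_nonneg ν (inv_nonneg.2 ht.le), Real.rpow_natCast]

theorem lintegral_enorm_le_lintegral_superlevelSet_rpow {F : Type*} [NormedAddCommGroup F]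
    [NormedSpace ℝ F] {μ ν : Measure E} [IsFiniteMeasure μ] [ν.IsAddHaarMeasure] (hμν : μ ≤ ν)
    {R : ℝ} (hμ : μ (closedBall 0 R)ᶜ = 0) {d : ℕ} (hE : finrank ℝ E = d) (hd : 1 < d)
    {f : E → F} (hf : ContDiff ℝ 1 f) (hf0 : f 0 = 0) :
    ∫⁻ x, ‖f x‖ₑ ∂μ ≤ ENNReal.ofReal R * ENNReal.ofReal (d / (d - 1)) *
      μ univ ^ (((d : ℝ) - 1) / d) *
        ∫⁻ s in Ioi 0, ν {y ∈ closedBall 0 R | s ≤ ‖fderiv ℝ f y‖} ^ (1 / (d : ℝ)) := by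
  set V : ℝ → ℝ≥0∞ := fun s => ν {y ∈ closedBall 0 R | s ≤ ‖fderiv ℝ f y‖}
  have hV (s : ℝ) : V s ≠ ∞ :=
    (measure_mono fun _ hy => hy.1).trans_lt measure_closedBall_lt_top |>.ne
  have hVmeas : Measurable V :=
    Antitone.measurable fun s s' hss' => measure_mono fun y hy => ⟨hy.1, hss'.trans hy.2⟩
  have hball {t : ℝ} (ht : t ∈ Ioc 0 1) (x : E) (hx : x ∈ closedBall 0 R) :
      t • x ∈ closedBall 0 R :=
    (convex_closedBall 0 R).smul_mem_of_zero_mem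
      (mem_closedBall_self (nonneg_of_mem_closedBall hx)) hx ⟨ht.1.le, ht.2⟩
  have hd1 : (1 : ℝ) < d := by exact_mod_cast hd
  set φ : ℝ → ℝ → ℝ≥0∞ := fun t s => min (μ univ) (ENNReal.ofReal (t⁻¹ ^ (d : ℝ)) * V s)
  have hφ : Measurable (Function.uncurry φ) := measurable_const.min <|
    (ENNReal.measurable_ofReal.comp (measurable_fst.inv.pow_const _)).mul
      (hVmeas.comp measurable_snd)
  calc ∫⁻ x, ‖f x‖ₑ ∂μ
      ≤ ENNReal.ofReal R *
          ∫⁻ t in Ioc (0 : ℝ) 1, ∫⁻ x in closedBall 0 R, ‖fderiv ℝ f (t • x)‖ₑ ∂μ :=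
        lintegral_enorm_le_lintegral_fderiv_smul hμ hf hf0
    _ ≤ ENNReal.ofReal R * ∫⁻ t in Ioc (0 : ℝ) 1, ∫⁻ s in Ioi 0, φ t s := by
        gcongr 1
        refine setLIntegral_mono' measurableSet_Ioc fun t ht => ?_
        simpa only [ofReal_norm, hE] using setLIntegral_comp_smul_le hμν measurableSet_closedBall
          ht.1 (hball ht) (hf.continuous_fderiv one_ne_zero).norm.measurable fun _ => norm_nonneg _
    _ = ENNReal.ofReal R * ∫⁻ s in Ioi 0, ∫⁻ t in Ioc (0 : ℝ) 1, φ t s := by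
        rw [lintegral_lintegral_swap hφ.aemeasurable]
    _ ≤ ENNReal.ofReal R * ∫⁻ s in Ioi 0, ∫⁻ t in Ioi 0, φ t s := by
        gcongr 1
        exact lintegral_mono fun s => lintegral_mono_set Ioc_subset_Ioi_self
    _ ≤ ENNReal.ofReal R * ∫⁻ s in Ioi 0,
          ENNReal.ofReal (d / (d - 1)) * μ univ ^ (((d : ℝ) - 1) / d) * V s ^ (1 / (d : ℝ)) := by
        gcongr 1
        exact lintegral_mono fun s => lintegral_Ioi_min_inv_rpow_le hd1 (measure_ne_top μ univ)
          (hV s)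
    _ = _ := by
        rw [lintegral_const_mul' _ _ (by finiteness), mul_assoc, mul_assoc, mul_assoc]

end

lemma lorentzNorm_eq_toReal_lintegral (d : ℕ) (g : EuclideanSpace ℝ (Fin d) → ℝ)
    {X : Set (EuclideanSpace ℝ (Fin d))} (hX : volume X ≠ ∞) :
    lorentzNorm d g X =
      d * (∫⁻ t in Ioi 0, volume {x ∈ X | t ≤ |g x|} ^ (1 / (d : ℝ))).toReal := by
  have hmeas : Measurable fun t : ℝ => volume {x ∈ X | t ≤ |g x|} :=
    Antitone.measurable fun t t' htt' => measure_mono fun x hx => ⟨hx.1, htt'.trans hx.2⟩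
  rw [lorentzNorm, ← integral_toReal (hmeas.pow_const _).aemeasurable
    (ae_of_all _ fun t => ENNReal.rpow_lt_top_of_nonneg (by positivity)
      ((measure_mono fun _ hx => hx.1).trans_lt hX.lt_top).ne)]
  simp only [ENNReal.toReal_rpow]

lemma lintegral_volume_superlevelSet_rpow_ne_top {d : ℕ} (hd : d ≠ 0)
    {g : EuclideanSpace ℝ (Fin d) → ℝ} {X : Set (EuclideanSpace ℝ (Fin d))} (hX : volume X ≠ ∞)
    {K : ℝ} (hK : ∀ x ∈ X, |g x| ≤ K) :
    ∫⁻ t in Ioi 0, volume {x ∈ X | t ≤ |g x|} ^ (1 / (d : ℝ)) ≠ ∞ := by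
  have hbound (t : ℝ) : volume {x ∈ X | t ≤ |g x|} ^ (1 / (d : ℝ)) ≤
      (Iic K).indicator (fun _ => volume X ^ (1 / (d : ℝ))) t := by
    by_cases ht : t ≤ K
    · rw [indicator_of_mem (show t ∈ Iic K from ht)]
      exact ENNReal.rpow_le_rpow (measure_mono fun _ hx => hx.1) (by positivity)
    · have : {x ∈ X | t ≤ |g x|} = ∅ :=
        eq_empty_of_forall_notMem fun x hx => ht (hx.2.trans (hK x hx.1))
      rw [this, measure_empty, ENNReal.zero_rpow_of_pos (by positivity)]
      exact zero_le
  refine ne_top_of_le_ne_top ?_ (lintegral_mono hbound)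
  rw [lintegral_indicator_const measurableSet_Iic, Measure.restrict_apply measurableSet_Iic,
    inter_comm, Ioi_inter_Iic, Real.volume_Ioc]
  exact ENNReal.mul_ne_top (ENNReal.rpow_ne_top_of_nonneg (by positivity) hX) ENNReal.ofReal_ne_top

theorem abs_integral_le_mul_lorentzNorm_fderiv {d : ℕ} (hd : 2 ≤ d) {R : ℝ} (hR : 0 ≤ R)
    {μ : Measure (EuclideanSpace ℝ (Fin d))} [IsFiniteMeasure μ] (hμν : μ ≤ volume)
    (hμ : μ (closedBall 0 R)ᶜ = 0) {f : EuclideanSpace ℝ (Fin d) → ℝ} (hf : ContDiff ℝ 1 f)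
    (hf0 : f 0 = 0) :
    |∫ x, f x ∂μ| ≤ R * (μ univ).toReal ^ (((d : ℝ) - 1) / d) *
      lorentzNorm d (fun x => ‖fderiv ℝ f x‖) (closedBall 0 R) := by
  have hBvol : volume (closedBall (0 : EuclideanSpace ℝ (Fin d)) R) ≠ ∞ :=
    measure_closedBall_lt_top.ne
  obtain ⟨K, hK⟩ := (isCompact_closedBall (0 : EuclideanSpace ℝ (Fin d)) R)
    |>.exists_bound_of_continuousOn (hf.continuous_fderiv one_ne_zero).norm.continuousOn
  have hL := lintegral_volume_superlevelSet_rpow_ne_top (by omega) hBvol hK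
  have key := lintegral_enorm_le_lintegral_superlevelSet_rpow hμν hμ finrank_euclideanSpace_fin
    (by omega) hf hf0
  simp only [abs_norm] at hL
  rw [lorentzNorm_eq_toReal_lintegral d _ hBvol]
  simp only [abs_norm]
  set L := ∫⁻ s in Ioi 0, volume {y ∈ closedBall 0 R | s ≤ ‖fderiv ℝ f y‖} ^ (1 / (d : ℝ))
  have hd1 : (1 : ℝ) ≤ d - 1 := by
    have : (2 : ℝ) ≤ d := by exact_mod_cast hd
    linarith
  have hRHS : ENNReal.ofReal R * ENNReal.ofReal (d / (d - 1)) *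
      μ univ ^ (((d : ℝ) - 1) / d) * L ≠ ∞ :=
    ENNReal.mul_ne_top (ENNReal.mul_ne_top (by finiteness)
      (ENNReal.rpow_ne_top_of_nonneg (by positivity) (measure_ne_top _ _))) hL
  calc |∫ x, f x ∂μ| = ‖∫ x, f x ∂μ‖ₑ.toReal := by rw [toReal_enorm, Real.norm_eq_abs]
    _ ≤ (∫⁻ x, ‖f x‖ₑ ∂μ).toReal :=
      ENNReal.toReal_mono (ne_top_of_le_ne_top hRHS key) (enorm_integral_le_lintegral_enorm f)
    _ ≤ _ := ENNReal.toReal_mono hRHS key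
    _ = R * (d / (d - 1)) * (μ univ).toReal ^ (((d : ℝ) - 1) / d) * L.toReal := by
      rw [ENNReal.toReal_mul, ENNReal.toReal_mul, ENNReal.toReal_mul, ENNReal.toReal_ofReal hR,
        ENNReal.toReal_ofReal (div_nonneg d.cast_nonneg (by linarith)), ENNReal.toReal_rpow]
    _ ≤ R * (μ univ).toReal ^ (((d : ℝ) - 1) / d) * (d * L.toReal) := by
      have hR0 : 0 ≤ R * (μ univ).toReal ^ (((d : ℝ) - 1) / d) * L.toReal := by positivity
      nlinarith [mul_le_mul_of_nonneg_right (div_le_self d.cast_nonneg hd1) hR0]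

theorem stmt1 (d : ℕ) (hd : 2 ≤ d) :
    ∃ c : ℝ, 0 < c ∧
      ∀ (R : ℝ), 0 < R →
      ∀ (μ : Measure (EuclideanSpace ℝ (Fin d))),
        μ (Metric.closedBall (0 : EuclideanSpace ℝ (Fin d)) R)ᶜ = 0 →
        (∀ A : Set (EuclideanSpace ℝ (Fin d)), MeasurableSet A → μ A ≤ volume A) →
      ∀ (f : EuclideanSpace ℝ (Fin d) → ℝ), ContDiff ℝ 1 f → f 0 = 0 →
        |∫ x, f x ∂μ| ≤
          c * R * (μ Set.univ).toReal ^ (((d : ℝ) - 1) / d) *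
            lorentzNorm d (fun x => ‖fderiv ℝ f x‖)
              (Metric.closedBall (0 : EuclideanSpace ℝ (Fin d)) R) := by
  refine ⟨1, one_pos, fun R hR μ hμ hμvol f hf hf0 => ?_⟩
  have hμν : μ ≤ volume := Measure.le_iff.2 hμvol
  have : IsFiniteMeasure μ := ⟨(measure_univ_le_add_compl (closedBall 0 R)).trans_lt <| by
    rw [hμ, add_zero]
    exact (hμν _).trans_lt measure_closedBall_lt_top⟩
  simpa only [one_mul] using abs_integral_le_mul_lorentzNorm_fderiv hd hR.le hμν hμ hf hf0
end
end

section
/- Let d ≥ 1, let x_1, …, x_N ∈ [0,1]^d, and let W > 0 be an ∞-transport bound for the pair (μ_N, Lebesgue measure restricted to [0,1]^d), where μ_N = (1/N)∑_{k=1}^N δ_{x_k}. Then there is a constant c_d > 0 depending only on d (one may take c_d = 2^d times the volume of the unit ball) such that for every x ∈ [0,1]^d, the number of indices i with ‖x_i − x‖ ≤ W is at most c_d · W^d · N. -/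
/-!
A coupling that moves no mass further than `W` sends the empirical mass of the ball `B(y, W)`
into the ball `B(y, 2W)`, so that mass, `#{i | ‖xᵢ - y‖ ≤ W} / N`, is at most the Lebesgue
measure of `B(y, 2W)`, which is `(2W)^d` times the volume of the unit ball.
-/

open MeasureTheory Metric
open scoped ENNReal

noncomputable section

/-- The closed unit cube `[0,1]^d` in `ℝ^d`. -/
def unitCube (d : ℕ) : Set (EuclideanSpace ℝ (Fin d)) :=
  {x | ∀ i, x i ∈ Set.Icc (0 : ℝ) 1}

/-- The empirical measure `(1/N) ∑ δ_{x k}`. -/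
def empiricalMeasure (d N : ℕ) (x : Fin N → EuclideanSpace ℝ (Fin d)) :
    Measure (EuclideanSpace ℝ (Fin d)) :=
  ((N : ℝ≥0∞))⁻¹ • ∑ k, MeasureTheory.Measure.dirac (x k)

/-- `W` is an `∞`-transport bound for `(μ, ν)`: there is a coupling of `μ` and `ν`
which moves no mass further than `W`. -/
def IsInfTransportBound {d : ℕ} (μ ν : Measure (EuclideanSpace ℝ (Fin d))) (W : ℝ) : Prop :=
  ∃ π : Measure (EuclideanSpace ℝ (Fin d) × EuclideanSpace ℝ (Fin d)),
    π.map Prod.fst = μ ∧ π.map Prod.snd = ν ∧ π {p | W < dist p.1 p.2} = 0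

theorem measure_le_measure_cthickening_of_coupling {α : Type*} [PseudoMetricSpace α]
    [MeasurableSpace α] {μ ν : Measure α} {π : Measure (α × α)} {W : ℝ}
    (hμ : π.map Prod.fst = μ) (hν : π.map Prod.snd = ν) (hπ : π {p | W < dist p.1 p.2} = 0)
    {s : Set α} (hs : MeasurableSet s) : μ s ≤ ν (cthickening W s) := by
  have hclose : ∀ᵐ p ∂π, dist p.1 p.2 ≤ W :=
    measure_eq_zero_iff_ae_notMem.mp hπ |>.mono fun _ hp => not_lt.mp hp
  rw [← hμ, ← hν, Measure.map_apply measurable_fst hs]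
  calc π (Prod.fst ⁻¹' s) ≤ π (Prod.snd ⁻¹' cthickening W s) :=
        measure_mono_ae <| hclose.mono fun p hp hps =>
          mem_cthickening_of_dist_le p.2 p.1 W s hps (dist_comm p.1 p.2 ▸ hp)
    _ ≤ π.map Prod.snd (cthickening W s) := Measure.le_map_apply measurable_snd.aemeasurable _

theorem IsInfTransportBound.measure_closedBall_le {d : ℕ}
    {μ ν : Measure (EuclideanSpace ℝ (Fin d))} {W : ℝ} (h : IsInfTransportBound μ ν W)
    (hW : 0 ≤ W) (y : EuclideanSpace ℝ (Fin d)) {r : ℝ} (hr : 0 ≤ r) :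
    μ (closedBall y r) ≤ ν (closedBall y (W + r)) := by
  obtain ⟨π, hμ, hν, hπ⟩ := h
  rw [← cthickening_closedBall hW hr]
  exact measure_le_measure_cthickening_of_coupling hμ hν hπ measurableSet_closedBall

open Classical in
theorem empiricalMeasure_apply (d N : ℕ) (x : Fin N → EuclideanSpace ℝ (Fin d))
    (s : Set (EuclideanSpace ℝ (Fin d))) :
    empiricalMeasure d N x s = (N : ℝ≥0∞)⁻¹ * (Finset.univ.filter fun k => x k ∈ s).card := by
  simp only [empiricalMeasure, Measure.smul_apply, smul_eq_mul, Measure.finsetSum_apply,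
    Measure.dirac_apply, Set.indicator_apply, Pi.one_apply, Finset.sum_boole]

open Classical in
theorem empiricalMeasure_real_apply (d N : ℕ) (x : Fin N → EuclideanSpace ℝ (Fin d))
    (s : Set (EuclideanSpace ℝ (Fin d))) :
    (empiricalMeasure d N x).real s = (Finset.univ.filter fun k => x k ∈ s).card / N := by
  rw [measureReal_def, empiricalMeasure_apply, ENNReal.toReal_mul, ENNReal.toReal_inv,
    ENNReal.toReal_natCast, ENNReal.toReal_natCast, inv_mul_eq_div]

theorem stmt3_general (d : ℕ) :
    ∃ c : ℝ, 0 < c ∧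
      c = 2 ^ d * (volume (Metric.closedBall (0 : EuclideanSpace ℝ (Fin d)) 1)).toReal ∧
      ∀ (N : ℕ), 0 < N →
      ∀ (x : Fin N → EuclideanSpace ℝ (Fin d)), (∀ k, x k ∈ unitCube d) →
      ∀ (W : ℝ), 0 < W →
      IsInfTransportBound (empiricalMeasure d N x) (volume.restrict (unitCube d)) W →
      ∀ y ∈ unitCube d,
        ((Finset.univ.filter fun i => dist (x i) y ≤ W).card : ℝ) ≤ c * W ^ d * N := by
  set V := volume.real (closedBall (0 : EuclideanSpace ℝ (Fin d)) 1)
  have hV : 0 < V :=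
    ENNReal.toReal_pos (measure_closedBall_pos _ _ one_pos).ne' measure_closedBall_lt_top.ne
  refine ⟨2 ^ d * V, by positivity, rfl, fun N hN x _ W hW hT y _ => ?_⟩
  have hmass : (empiricalMeasure d N x).real (closedBall y W)
      ≤ volume.real (closedBall y (W + W)) := by
    refine ENNReal.toReal_mono measure_closedBall_lt_top.ne ?_
    exact (hT.measure_closedBall_le hW.le y hW.le).trans (Measure.restrict_le_self _)
  rw [empiricalMeasure_real_apply, Measure.addHaar_real_closedBall' _ _ (by positivity),
    finrank_euclideanSpace_fin, div_le_iff₀ (by exact_mod_cast hN)] at hmass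
  classical
  calc _ = ((Finset.univ.filter fun i => x i ∈ closedBall y W).card : ℝ) := by
        simp only [mem_closedBall]
    _ ≤ (W + W) ^ d * V * N := hmass
    _ = 2 ^ d * V * W ^ d * N := by ring

theorem stmt3 (d : ℕ) (hd : 1 ≤ d) :
    ∃ c : ℝ, 0 < c ∧
      c = 2 ^ d * (volume (Metric.closedBall (0 : EuclideanSpace ℝ (Fin d)) 1)).toReal ∧
      ∀ (N : ℕ), 0 < N →
      ∀ (x : Fin N → EuclideanSpace ℝ (Fin d)), (∀ k, x k ∈ unitCube d) →
      ∀ (W : ℝ), 0 < W →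
      IsInfTransportBound (empiricalMeasure d N x) (volume.restrict (unitCube d)) W →
      ∀ y ∈ unitCube d,
        ((Finset.univ.filter fun i => dist (x i) y ≤ W).card : ℝ) ≤ c * W ^ d * N :=
  stmt3_general d
end
end

section
/- Let d ≥ 2 and r > 0, and let B = B(0,r) be the closed ball of radius r around the origin in ℝ^d. Then there is a constant c_d > 0 depending only on d such that for every continuously differentiable f : ℝ^d → ℝ with f(0) = 0, |∫_{B(0,r)} f(x) dx| ≤ c_d · r^d · ‖∇f‖_{L^∞(B)}^{(d−1)/d} · ‖∇f‖_{L^1(B)}^{1/d}. -/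
/-!
Fix `0 < t₀ ≤ 1` and split `∫_B f = ∫_B (f x - f (t₀ • x)) + ∫_B f (t₀ • x)`. As `f 0 = 0`, the
mean value inequality gives `|f (t₀ • x)| ≤ M t₀ r` with `M = ‖∇f‖_{L^∞(B)}`, so the second term is
at most `r |B| M t₀`. The first term is controlled by integrating `‖∇f‖` along the rays
`t ↦ t • x`, `t ∈ [t₀, 1]`; by Fubini and the substitution `y = t • x` it is at most
`r I ∫_{t₀}^1 t^{-d} dt ≤ r I t₀^{1-d}` with `I = ‖∇f‖_{L^1(B)}`. Since `I ≤ |B| M`, the choice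
`t₀ = (I / (|B| M))^{1/d} ≤ 1` balances the two terms, and `|B| = |B(0,1)| r^d` gives the bound
with `c = 2 |B(0,1)|^{(d-1)/d}`.
-/

open MeasureTheory Metric Set Module Filter Topology

theorem IsCompact.le_biSup {X : Type*} [TopologicalSpace X] {s : Set X} (hs : IsCompact s)
    {g : X → ℝ} (hg : ContinuousOn g s) {x : X} (hx : x ∈ s) : g x ≤ ⨆ y ∈ s, g y :=
  le_ciSup₂ (f := fun y (_ : y ∈ s) => g y)
    ((hs.bddAbove_image hg).mono <| by
      rintro _ ⟨_, ⟨y, rfl⟩, hy, rfl⟩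
      exact ⟨y, hy, rfl⟩) x hx

theorem le_two_mul_rpow_mul_rpow_of_forall_le {L a b : ℝ} {n : ℕ} (hn : n ≠ 0) (hb : 0 ≤ b)
    (hba : b ≤ a) (h : ∀ t : ℝ, 0 < t → t ≤ 1 → L ≤ a * t + b * t ^ (1 - (n : ℤ))) :
    L ≤ 2 * a ^ (((n : ℝ) - 1) / n) * b ^ ((1 : ℝ) / n) := by
  have hn' : (n : ℝ) ≠ 0 := Nat.cast_ne_zero.2 hn
  rcases hb.eq_or_lt with rfl | hb
  · rw [Real.zero_rpow (one_div_ne_zero hn'), mul_zero]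
    have hlim : Tendsto (fun t : ℝ => a * t) (𝓝[>] 0) (𝓝 0) := by
      simpa using ((continuous_const_mul a).tendsto 0).mono_left nhdsWithin_le_nhds
    refine ge_of_tendsto hlim ?_
    filter_upwards [Ioc_mem_nhdsGT one_pos] with t ht
    simpa using h t ht.1 ht.2
  · have ha : 0 < a := hb.trans_le hba
    set t := (b / a) ^ ((1 : ℝ) / n) with ht
    have htpos : 0 < t := by positivity
    have htn : t ^ n = b / a := by
      rw [ht, ← Real.rpow_natCast, ← Real.rpow_mul (by positivity), one_div_mul_cancel hn',
        Real.rpow_one]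
    have hat : a * t = a ^ (((n : ℝ) - 1) / n) * b ^ ((1 : ℝ) / n) := by
      rw [ht, Real.div_rpow hb.le ha.le, sub_div, div_self hn', Real.rpow_sub ha, Real.rpow_one]
      field_simp
    have hbt : b * t ^ (1 - (n : ℤ)) = a * t := by
      rw [zpow_sub₀ htpos.ne', zpow_one, zpow_natCast, htn]
      field_simp
    calc L ≤ a * t + b * t ^ (1 - (n : ℤ)) :=
          h t htpos (Real.rpow_le_one (by positivity) ((div_le_one ha).2 hba) (by positivity))
      _ = 2 * a ^ (((n : ℝ) - 1) / n) * b ^ ((1 : ℝ) / n) := by rw [hbt, hat]; ring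

theorem integral_zpow_neg_le {n : ℕ} (hn : 2 ≤ n) {t₀ : ℝ} (ht₀ : 0 < t₀) (ht₁ : t₀ ≤ 1) :
    ∫ t in t₀..1, t ^ (-(n : ℤ)) ≤ t₀ ^ (1 - (n : ℤ)) := by
  have h0 : (0 : ℝ) ∉ uIcc t₀ 1 := by
    rw [uIcc_of_le ht₁]
    exact fun h => ht₀.not_ge h.1
  have hn' : (1 : ℝ) ≤ n - 1 := by
    have : (2 : ℝ) ≤ n := by exact_mod_cast hn
    linarith
  have hu : 0 ≤ t₀ ^ (1 - (n : ℤ)) := zpow_nonneg ht₀.le _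
  rw [integral_zpow (Or.inr ⟨by omega, h0⟩), one_zpow, show -(n : ℤ) + 1 = 1 - n by ring,
    show (((-(n : ℤ) : ℤ) : ℝ) + 1) = -((n : ℝ) - 1) by push_cast; ring, div_neg, ← neg_div,
    neg_sub, div_le_iff₀ (by linarith)]
  nlinarith

section Rays

variable {E : Type*} [NormedAddCommGroup E] [NormedSpace ℝ E] {f : E → ℝ}

theorem sub_comp_smul_eq_integral_fderiv (hf : ContDiff ℝ 1 f) (x : E) (t₀ : ℝ) :
    f x - f (t₀ • x) = ∫ t in t₀..1, fderiv ℝ f (t • x) x := by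
  have hdf := hf.differentiable one_ne_zero
  have hder : ∀ t ∈ uIcc t₀ 1,
      HasDerivAt (fun s : ℝ => f (s • x)) (fderiv ℝ f (t • x) x) t := fun t _ =>
    (hdf (t • x)).hasFDerivAt.comp_hasDerivAt t (by simpa using (hasDerivAt_id t).smul_const x)
  have hcont : Continuous fun t : ℝ => fderiv ℝ f (t • x) x := by
    have := hf.continuous_fderiv one_ne_zero
    fun_prop
  rw [intervalIntegral.integral_eq_sub_of_hasDerivAt hder (hcont.intervalIntegrable _ _), one_smul]

theorem abs_sub_comp_smul_le (hf : ContDiff ℝ 1 f) (x : E) {t₀ : ℝ} (ht₀ : t₀ ≤ 1) :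
    |f x - f (t₀ • x)| ≤ ‖x‖ * ∫ t in t₀..1, ‖fderiv ℝ f (t • x)‖ := by
  have := hf.continuous_fderiv one_ne_zero
  rw [sub_comp_smul_eq_integral_fderiv hf, ← intervalIntegral.integral_const_mul,
    ← Real.norm_eq_abs]
  refine intervalIntegral.norm_integral_le_of_norm_le ht₀ (ae_of_all _ fun t _ => ?_)
    ((by fun_prop : Continuous fun t : ℝ => ‖x‖ * ‖fderiv ℝ f (t • x)‖).intervalIntegrable _ _)
  rw [mul_comm]
  exact (fderiv ℝ f (t • x)).le_opNorm x

end Rays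

section Scaling

variable {E : Type*} [NormedAddCommGroup E] [NormedSpace ℝ E] [FiniteDimensional ℝ E]
  [MeasurableSpace E] [BorelSpace E] (μ : Measure E) [μ.IsAddHaarMeasure]

theorem setIntegral_closedBall_comp_smul_le {r t : ℝ} {g : E → ℝ}
    (hg : IntegrableOn g (closedBall 0 r) μ) (hg0 : 0 ≤ g) (hr : 0 ≤ r) (ht₀ : 0 < t)
    (ht₁ : t ≤ 1) :
    ∫ x in closedBall 0 r, g (t • x) ∂μ ≤
      t ^ (-(finrank ℝ E : ℤ)) * ∫ x in closedBall 0 r, g x ∂μ := by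
  rw [Measure.setIntegral_comp_smul_of_pos μ g _ ht₀, smul_closedBall _ _ hr, smul_zero,
    Real.norm_of_nonneg ht₀.le, smul_eq_mul, zpow_neg, zpow_natCast]
  refine mul_le_mul_of_nonneg_left ?_ (by positivity)
  exact setIntegral_mono_set hg (ae_of_all _ fun x => hg0 x)
    (closedBall_subset_closedBall (mul_le_of_le_one_left hr ht₁)).eventuallyLE

theorem setIntegral_closedBall_integral_comp_smul_le {r t₀ : ℝ} {g : E → ℝ} (hg : Continuous g)
    (hg0 : 0 ≤ g) (hn : 2 ≤ finrank ℝ E) (hr : 0 ≤ r) (ht₀ : 0 < t₀) (ht₁ : t₀ ≤ 1) :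
    ∫ x in closedBall 0 r, (∫ t in t₀..1, g (t • x)) ∂μ ≤
      t₀ ^ (1 - (finrank ℝ E : ℤ)) * ∫ x in closedBall 0 r, g x ∂μ := by
  have hgB : IntegrableOn g (closedBall 0 r) μ :=
    hg.continuousOn.integrableOn_compact (isCompact_closedBall _ _)
  have hprod : Integrable (Function.uncurry fun t x => g (t • x))
      ((volume.restrict (uIoc t₀ 1)).prod (μ.restrict (closedBall 0 r))) := by
    rw [Measure.prod_restrict]
    exact ((hg.comp continuous_smul).continuousOn.integrableOn_compact
      (isCompact_uIcc.prod (isCompact_closedBall _ _))).mono_set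
      (prod_mono uIoc_subset_uIcc subset_rfl)
  have hzpow : ContinuousOn (fun t : ℝ => t ^ (-(finrank ℝ E : ℤ))) (uIcc t₀ 1) :=
    continuousOn_id.zpow₀ _ fun t ht => Or.inl (ht₀.trans_le (by simpa [ht₁] using ht.1)).ne'
  rw [← intervalIntegral_integral_swap hprod]
  calc ∫ t in t₀..1, ∫ x in closedBall 0 r, g (t • x) ∂μ
      ≤ ∫ t in t₀..1, t ^ (-(finrank ℝ E : ℤ)) * ∫ x in closedBall 0 r, g x ∂μ := by
        refine intervalIntegral.integral_mono_on ht₁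
          (intervalIntegrable_iff.2 hprod.integral_prod_left)
          ((hzpow.mul continuousOn_const).intervalIntegrable) fun t ht => ?_
        exact setIntegral_closedBall_comp_smul_le μ hgB hg0 hr (ht₀.trans_le ht.1) ht.2
    _ = (∫ t in t₀..1, t ^ (-(finrank ℝ E : ℤ))) * ∫ x in closedBall 0 r, g x ∂μ :=
        intervalIntegral.integral_mul_const _ _
    _ ≤ t₀ ^ (1 - (finrank ℝ E : ℤ)) * ∫ x in closedBall 0 r, g x ∂μ := by
        gcongr
        · exact setIntegral_nonneg measurableSet_closedBall fun x _ => hg0 x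
        · exact integral_zpow_neg_le hn ht₀ ht₁

theorem abs_setIntegral_closedBall_le {f : E → ℝ} (hf : ContDiff ℝ 1 f) (hf0 : f 0 = 0)
    (hn : 2 ≤ finrank ℝ E) {r M t₀ : ℝ} (hr : 0 ≤ r)
    (hM : ∀ x ∈ closedBall (0 : E) r, ‖fderiv ℝ f x‖ ≤ M) (ht₀ : 0 < t₀) (ht₁ : t₀ ≤ 1) :
    |∫ x in closedBall 0 r, f x ∂μ| ≤
      r * (μ.real (closedBall 0 r) * M * t₀ +
        (∫ x in closedBall 0 r, ‖fderiv ℝ f x‖ ∂μ) * t₀ ^ (1 - (finrank ℝ E : ℤ))) := by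
  set B := closedBall (0 : E) r
  have hB : IsCompact B := isCompact_closedBall _ _
  have h0B : (0 : E) ∈ B := mem_closedBall_self hr
  have hM0 : 0 ≤ M := (norm_nonneg _).trans (hM 0 h0B)
  have hgrad := (hf.continuous_fderiv one_ne_zero).norm
  have hsmulB : ∀ x ∈ B, t₀ • x ∈ B := fun x hx =>
    (convex_closedBall 0 r).smul_mem_of_zero_mem h0B hx ⟨ht₀.le, ht₁⟩
  have hlin : ∀ y ∈ B, ‖f y‖ ≤ M * ‖y‖ := fun y hy => by
    simpa [hf0] using (convex_closedBall (0 : E) r).norm_image_sub_le_of_norm_fderiv_le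
      (fun x _ => hf.differentiable one_ne_zero x) hM h0B hy
  have hnear : |∫ x in B, f (t₀ • x) ∂μ| ≤ r * (μ.real B * M * t₀) := by
    have hbound : ∀ x ∈ B, ‖f (t₀ • x)‖ ≤ M * t₀ * r := fun x hx =>
      calc ‖f (t₀ • x)‖ ≤ M * ‖t₀ • x‖ := hlin _ (hsmulB x hx)
        _ = M * t₀ * ‖x‖ := by rw [norm_smul, Real.norm_of_nonneg ht₀.le, mul_assoc]
        _ ≤ M * t₀ * r := by gcongr; exact mem_closedBall_zero_iff.1 hx
    calc |∫ x in B, f (t₀ • x) ∂μ| ≤ M * t₀ * r * μ.real B :=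
          norm_setIntegral_le_of_norm_le_const hB.measure_lt_top hbound
      _ = r * (μ.real B * M * t₀) := by ring
  have hfar : |∫ x in B, (f x - f (t₀ • x)) ∂μ| ≤
      r * ((∫ x in B, ‖fderiv ℝ f x‖ ∂μ) * t₀ ^ (1 - (finrank ℝ E : ℤ))) := by
    have hray : IntegrableOn (fun x => r * ∫ t in t₀..1, ‖fderiv ℝ f (t • x)‖) B μ := by
      have := hf.continuous_fderiv one_ne_zero
      exact (by fun_prop : Continuous _).continuousOn.integrableOn_compact hB
    calc |∫ x in B, (f x - f (t₀ • x)) ∂μ|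
        ≤ ∫ x in B, r * (∫ t in t₀..1, ‖fderiv ℝ f (t • x)‖) ∂μ := by
          rw [← Real.norm_eq_abs]
          refine norm_integral_le_of_norm_le hray ?_
          refine (ae_restrict_iff' measurableSet_closedBall).2 (ae_of_all _ fun x hx => ?_)
          refine (abs_sub_comp_smul_le hf x ht₁).trans ?_
          gcongr
          · exact intervalIntegral.integral_nonneg ht₁ fun t _ => norm_nonneg _
          · exact mem_closedBall_zero_iff.1 hx
      _ = r * ∫ x in B, (∫ t in t₀..1, ‖fderiv ℝ f (t • x)‖) ∂μ := integral_const_mul _ _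
      _ ≤ r * ((∫ x in B, ‖fderiv ℝ f x‖ ∂μ) * t₀ ^ (1 - (finrank ℝ E : ℤ))) := by
          rw [mul_comm (∫ x in B, _ ∂μ)]
          gcongr
          exact setIntegral_closedBall_integral_comp_smul_le μ hgrad (fun _ => norm_nonneg _) hn hr
            ht₀ ht₁
  have hsplit : ∫ x in B, f x ∂μ = ∫ x in B, (f x - f (t₀ • x)) ∂μ + ∫ x in B, f (t₀ • x) ∂μ := by
    have hfB : IntegrableOn f B μ := hf.continuous.continuousOn.integrableOn_compact hB
    have hfB' : IntegrableOn (fun x => f (t₀ • x)) B μ :=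
      (hf.continuous.comp (continuous_const_smul t₀)).continuousOn.integrableOn_compact hB
    rw [integral_sub hfB hfB', sub_add_cancel]
  rw [hsplit]
  linarith [abs_add_le (∫ x in B, (f x - f (t₀ • x)) ∂μ) (∫ x in B, f (t₀ • x) ∂μ)]

theorem abs_setIntegral_closedBall_le_rpow {f : E → ℝ} (hf : ContDiff ℝ 1 f) (hf0 : f 0 = 0)
    (hn : 2 ≤ finrank ℝ E) {r M : ℝ} (hr : 0 < r)
    (hM : ∀ x ∈ closedBall (0 : E) r, ‖fderiv ℝ f x‖ ≤ M) :
    |∫ x in closedBall 0 r, f x ∂μ| ≤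
      r * (2 * (μ.real (closedBall 0 r) * M) ^ (((finrank ℝ E : ℝ) - 1) / finrank ℝ E) *
        (∫ x in closedBall 0 r, ‖fderiv ℝ f x‖ ∂μ) ^ ((1 : ℝ) / finrank ℝ E)) := by
  have hIM : ∫ x in closedBall 0 r, ‖fderiv ℝ f x‖ ∂μ ≤ μ.real (closedBall 0 r) * M :=
    calc ∫ x in closedBall 0 r, ‖fderiv ℝ f x‖ ∂μ
        ≤ ‖∫ x in closedBall 0 r, ‖fderiv ℝ f x‖ ∂μ‖ := Real.le_norm_self _
      _ ≤ M * μ.real (closedBall 0 r) := norm_setIntegral_le_of_norm_le_const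
          (isCompact_closedBall _ r).measure_lt_top fun x hx => (norm_norm _).trans_le (hM x hx)
      _ = μ.real (closedBall 0 r) * M := mul_comm _ _
  rw [← div_le_iff₀' hr]
  refine le_two_mul_rpow_mul_rpow_of_forall_le (by omega)
    (setIntegral_nonneg measurableSet_closedBall fun x _ => norm_nonneg _) hIM fun t ht₀ ht₁ => ?_
  rw [div_le_iff₀' hr]
  exact abs_setIntegral_closedBall_le μ hf hf0 hn hr.le hM ht₀ ht₁

end Scaling

theorem stmt5 (d : ℕ) (hd : 2 ≤ d) :
    ∃ c : ℝ, 0 < c ∧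
      ∀ (r : ℝ), 0 < r →
      ∀ (f : EuclideanSpace ℝ (Fin d) → ℝ), ContDiff ℝ 1 f → f 0 = 0 →
        |∫ x in Metric.closedBall (0 : EuclideanSpace ℝ (Fin d)) r, f x| ≤
          c * r ^ d *
            (⨆ x ∈ Metric.closedBall (0 : EuclideanSpace ℝ (Fin d)) r,
                ‖fderiv ℝ f x‖) ^ (((d : ℝ) - 1) / d) *
            (∫ x in Metric.closedBall (0 : EuclideanSpace ℝ (Fin d)) r,
                ‖fderiv ℝ f x‖) ^ ((1 : ℝ) / d) := by
  have hfin : finrank ℝ (EuclideanSpace ℝ (Fin d)) = d := finrank_euclideanSpace_fin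
  set ω := volume.real (closedBall (0 : EuclideanSpace ℝ (Fin d)) 1)
  have hω : 0 < ω := ENNReal.toReal_pos (measure_closedBall_pos _ _ one_pos).ne'
    measure_closedBall_lt_top.ne
  refine ⟨2 * ω ^ (((d : ℝ) - 1) / d), by positivity, fun r hr f hf hf0 => ?_⟩
  set M := ⨆ x ∈ closedBall (0 : EuclideanSpace ℝ (Fin d)) r, ‖fderiv ℝ f x‖
  have hM : ∀ x ∈ closedBall 0 r, ‖fderiv ℝ f x‖ ≤ M := fun x hx =>
    (isCompact_closedBall 0 r).le_biSup (hf.continuous_fderiv one_ne_zero).norm.continuousOn hx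
  have hM0 : 0 ≤ M := (norm_nonneg _).trans (hM 0 (mem_closedBall_self hr.le))
  have hr_pow : r * (r ^ d) ^ (((d : ℝ) - 1) / d) = r ^ d := by
    rw [← Real.rpow_natCast r d, ← Real.rpow_mul hr.le, mul_div_cancel₀ _ (by positivity),
      mul_comm, ← Real.rpow_add_one hr.ne', sub_add_cancel]
  have key := abs_setIntegral_closedBall_le_rpow volume hf hf0 (hfin.symm ▸ hd) hr hM
  rw [hfin, Measure.addHaar_real_closedBall' _ _ hr.le, hfin, mul_comm (r ^ d),
    Real.mul_rpow (by positivity) hM0, Real.mul_rpow hω.le (by positivity)] at key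
  calc _ ≤ _ := key
    _ = 2 * ω ^ (((d : ℝ) - 1) / d) * (r * (r ^ d) ^ (((d : ℝ) - 1) / d)) *
          M ^ (((d : ℝ) - 1) / d) *
          (∫ x in closedBall 0 r, ‖fderiv ℝ f x‖) ^ ((1 : ℝ) / d) := by ring
    _ = _ := by rw [hr_pow]
end
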